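/- Let G be a graph with at least two edges in which some edge h satisfies EN[h] = E(G) (h meets every other edge). Then M(G) is homotopy equivalent to the wedge of M(G \ {h}) and S^0; in particular if additionally every edge of G meets every other edge, M(G) is a wedge of |E(G)| − 1 copies of S^0. -/

import Mathlib

noncomputable section

/-- The geometric realization of a set of faces `K` (an abstract simplicial complex):
the space of convex-combination weight functions supported on a face. -/
def realization {α : Type*} (K : Set (Finset α)) : Type _ :=
  {f : α → ℝ // (∀ a, 0 ≤ f a) ∧ ∃ s ∈ K, Function.support f ⊆ ↑s ∧ ∑ a ∈ s, f a = 1}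

instance realization.topologicalSpace {α : Type*} (K : Set (Finset α)) :
    TopologicalSpace (realization K) :=
  instTopologicalSpaceSubtype

/-- The unreduced suspension of a space: the cylinder `X × [0,1]` together with two cone
points, gluing `X × {0}` to one and `X × {1}` to the other.  (With this definition, the
suspension of the empty space is the two-point space `S⁰`.) -/
def Susp (X : Type*) [TopologicalSpace X] : Type _ :=
  Quot (fun (p q : (X × Set.Icc (0:ℝ) 1) ⊕ Bool) =>
    match p, q with
    | Sum.inl p, Sum.inr b => ((p.2 : ℝ) = 0 ∧ b = false) ∨ ((p.2 : ℝ) = 1 ∧ b = true)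
    | _, _ => False)

instance Susp.topologicalSpace (X : Type*) [TopologicalSpace X] :
    TopologicalSpace (Susp X) := by
  unfold Susp; infer_instance

/-- The wedge sum of two pointed spaces. -/
def Wedge (X : Type*) (Y : Type*) [TopologicalSpace X] [TopologicalSpace Y]
    (x : X) (y : Y) : Type _ :=
  Quot (fun (a b : X ⊕ Y) => a = Sum.inl x ∧ b = Sum.inr y)

instance Wedge.topologicalSpace (X : Type*) (Y : Type*) [TopologicalSpace X]
    [TopologicalSpace Y] (x : X) (y : Y) : TopologicalSpace (Wedge X Y x y) := by
  unfold Wedge; infer_instance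

/-- The `n`-sphere, as the unit sphere in `ℝ^(n+1)`. -/
def nSphere (n : ℕ) : Type :=
  Metric.sphere (0 : EuclideanSpace ℝ (Fin (n + 1))) 1

instance nSphere.topologicalSpace (n : ℕ) : TopologicalSpace (nSphere n) := by
  unfold nSphere; infer_instance

/-- A basepoint on the `n`-sphere. -/
def spherePt (n : ℕ) : nSphere n :=
  ⟨EuclideanSpace.single 0 1, by simp [EuclideanSpace.norm_single]⟩

/-- The wedge of a family of spheres, of dimensions `n i`. -/
def WedgeOfSpheres {ι : Type} (n : ι → ℕ) : Type :=
  Quot (fun (a b : Σ i, nSphere (n i)) =>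
    ∃ i j, a = ⟨i, spherePt (n i)⟩ ∧ b = ⟨j, spherePt (n j)⟩)

instance WedgeOfSpheres.topologicalSpace {ι : Type} (n : ι → ℕ) :
    TopologicalSpace (WedgeOfSpheres n) := by
  unfold WedgeOfSpheres; infer_instance

/-- A space is (homotopy equivalent to) a wedge of spheres if it is homotopy equivalent to a
wedge of finitely many spheres of possibly varying dimensions. -/
def IsWedgeOfSpheres (X : Type*) [TopologicalSpace X] : Prop :=
  ∃ (k : ℕ) (n : Fin k → ℕ), Nonempty (ContinuousMap.HomotopyEquiv X (WedgeOfSpheres n))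
/-- The matching complex of a simple graph: faces are finite sets of pairwise disjoint edges. -/
def matchingComplex {V : Type*} (G : SimpleGraph V) : Set (Finset (Sym2 V)) :=
  {s | (∀ e ∈ s, e ∈ G.edgeSet) ∧ ∀ e ∈ s, ∀ f ∈ s, e ≠ f → ∀ v, v ∈ e → v ∉ f}

/-- The open edge neighborhood `EN(e)`: the set of edges of `G` adjacent to (sharing a vertex
with) `e`, other than `e` itself. -/
def edgeNbhdOpen {V : Type*} (G : SimpleGraph V) (e : Sym2 V) : Set (Sym2 V) :=
  {f | f ∈ G.edgeSet ∧ f ≠ e ∧ ∃ v, v ∈ e ∧ v ∈ f}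

/-- The closed edge neighborhood `EN[e]`: the set of edges of `G` sharing a vertex with `e`,
together with `e` itself. -/
def edgeNbhdClosed {V : Type*} (G : SimpleGraph V) (e : Sym2 V) : Set (Sym2 V) :=
  {f | f ∈ G.edgeSet ∧ ∃ v, v ∈ e ∧ v ∈ f}

/-- Two chords of a circle, with endpoints at circle positions `a, b` and `c, d`
(positions measured injectively along the circle), cross iff their endpoints interleave. -/
def chordsCross (a b c d : ℝ) : Prop :=
  (min a b < min c d ∧ min c d < max a b ∧ max a b < max c d) ∨
  (min c d < min a b ∧ min a b < max c d ∧ max c d < max a b)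

/-- A graph is outerplanar iff it has a drawing with all vertices (injectively) on a circle
and edges drawn as pairwise noncrossing chords; equivalently, a planar drawing with every
vertex on the unbounded face. -/
def Outerplanar {V : Type*} (G : SimpleGraph V) : Prop :=
  ∃ f : V ↪ ℝ, ∀ a b c d, G.Adj a b → G.Adj c d →
    a ≠ c → a ≠ d → b ≠ c → b ≠ d → ¬ chordsCross (f a) (f b) (f c) (f d)

/-- An outerplanar graph is maximal outerplanar if adding any edge destroys outerplanarity. -/
def MaximalOuterplanar {V : Type*} (G : SimpleGraph V) : Prop :=
  Outerplanar G ∧ ∀ a b : V, a ≠ b → ¬ G.Adj a b →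
    ¬ Outerplanar (G ⊔ SimpleGraph.fromEdgeSet {s(a, b)})
/-- A cutpoint (cut-vertex) of a graph: a vertex whose removal disconnects two vertices that
were connected, i.e. whose removal increases the number of connected components. -/
def IsCutvertex {V : Type*} (G : SimpleGraph V) (v : V) : Prop :=
  ∃ a b : {u : V // u ≠ v}, G.Reachable a.1 b.1 ∧
    ¬ (G.induce {u : V | u ≠ v}).Reachable ⟨a.1, a.2⟩ ⟨b.1, b.2⟩

/-- A block of `G`: a maximal connected subgraph having no cutpoint of itself. -/
def IsBlock {V : Type*} (G : SimpleGraph V) (H : G.Subgraph) : Prop :=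
  H.Connected ∧ (∀ v, ¬ IsCutvertex H.coe v) ∧
    ∀ H' : G.Subgraph, H ≤ H' → H'.Connected → (∀ v, ¬ IsCutvertex H'.coe v) → H' = H

/-- The block-cutpoint graph of `G`: the bipartite graph on blocks and cutpoints of `G`,
with a block `B` adjacent to a cutpoint `c` iff `c` belongs to `B`. -/
def blockCutpointGraph {V : Type*} (G : SimpleGraph V) :
    SimpleGraph ({H : G.Subgraph // IsBlock G H} ⊕ {v : V // IsCutvertex G v}) :=
  SimpleGraph.fromRel (fun x y =>
    ∃ B c, x = Sum.inl B ∧ y = Sum.inr c ∧ c.1 ∈ B.1.verts)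

/-- A cycle (given as a closed walk) is chordless if every edge of `G` joining two of its
vertices is an edge of the cycle.  In an outerplanar graph drawn with all vertices on the
unbounded face, the basic cycles (boundaries of the bounded faces) are exactly the
chordless cycles. -/
def Chordless {V : Type*} (G : SimpleGraph V) {v : V} (p : G.Walk v v) : Prop :=
  ∀ a ∈ p.support, ∀ b ∈ p.support, G.Adj a b → s(a, b) ∈ p.edges

/-- The basic cycles of (an outerplanar graph) `G`, recorded by their edge sets. -/
def basicCycles {V : Type*} [DecidableEq V] (G : SimpleGraph V) : Set (Finset (Sym2 V)) :=
  {s | ∃ (v : V) (p : G.Walk v v), p.IsCycle ∧ Chordless G p ∧ s = p.edges.toFinset}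

/-- The weak dual of (an outerplanar graph) `G`: vertices are the basic cycles (bounded
faces), two being adjacent iff they share at least one edge. -/
def weakDual {V : Type*} [DecidableEq V] (G : SimpleGraph V) :
    SimpleGraph (basicCycles G) :=
  SimpleGraph.fromRel (fun s t => ((s.1 ∩ t.1) : Finset (Sym2 V)).Nonempty)

/-- A multigraph on vertex set `V`: an edge index type together with an assignment of
(unordered pairs of) endpoints. -/
structure Multigraph (V : Type u) : Type (max u (v + 1)) where
  E : Type v
  ends : E → Sym2 V

/-- The matching complex of a multigraph: faces are finite sets of pairwise
vertex-disjoint edges. -/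
def Multigraph.matchingComplex {V : Type*} (M : Multigraph V) : Set (Finset M.E) :=
  {s | ∀ i ∈ s, ∀ j ∈ s, i ≠ j → ∀ v, v ∈ M.ends i → v ∉ M.ends j}

namespace MCAux

open Function

/-- indicator weight function of a single vertex of the complex -/
noncomputable def ind {α : Type*} [DecidableEq α] (e : α) : α → ℝ :=
  fun a => if a = e then 1 else 0

lemma ind_self {α : Type*} [DecidableEq α] (e : α) : ind e e = 1 := if_pos rfl

lemma ind_of_ne {α : Type*} [DecidableEq α] {e a : α} (h : a ≠ e) : ind e a = 0 := if_neg h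

lemma ind_nonneg {α : Type*} [DecidableEq α] (e : α) (a : α) : 0 ≤ ind e a := by
  unfold ind; split <;> norm_num

lemma support_ind {α : Type*} [DecidableEq α] (e : α) :
    Function.support (ind e) ⊆ {e} := by
  intro a ha
  by_contra hne
  exact ha (ind_of_ne (by simpa using hne))

lemma ind_mem_realization {α : Type*} [DecidableEq α] {K : Set (Finset α)} {e : α}
    (he : {e} ∈ K) :
    (∀ a, 0 ≤ ind e a) ∧
      ∃ s ∈ K, Function.support (ind e) ⊆ ↑s ∧ ∑ a ∈ s, ind e a = 1 := by
  refine ⟨ind_nonneg e, {e}, he, ?_, ?_⟩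
  · simpa using support_ind e
  · simp [ind_self]

/-- the point of the realization concentrated at a vertex `e` -/
noncomputable def indPt {α : Type*} [DecidableEq α] {K : Set (Finset α)} (e : α)
    (he : {e} ∈ K) : realization K :=
  ⟨ind e, ind_mem_realization he⟩

lemma eq_ind_of_support {α : Type*} [DecidableEq α] {f : α → ℝ} {c : α}
    (hsupp : Function.support f ⊆ {c}) (hc : f c = 1) : f = ind c := by
  funext a
  by_cases hac : a = c
  · subst hac; simpa [ind_self] using hc
  · have : a ∉ Function.support f := fun hmem => hac (by simpa using hsupp hmem)
    simp only [Function.mem_support, not_not] at this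
    rw [this, ind_of_ne hac]

lemma eq_ind {α : Type*} [DecidableEq α] {K : Set (Finset α)} {g : α → ℝ} {c : α}
    (hg : ∃ s ∈ K, Function.support g ⊆ ↑s ∧ ∑ a ∈ s, g a = 1)
    (hs : ∀ s ∈ K, c ∈ s → s = {c}) (hne : g c ≠ 0) : g = ind c := by
  obtain ⟨s, hsK, hsupp, hsum⟩ := hg
  have hcs : c ∈ s := by
    have := hsupp (Function.mem_support.mpr hne)
    exact_mod_cast this
  have hseq : s = {c} := hs s hsK hcs
  subst hseq
  refine eq_ind_of_support ?_ ?_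
  · simpa using hsupp
  · simpa using hsum

/-- The "south pole" of the 0-sphere. -/
noncomputable def negPt : nSphere 0 :=
  ⟨EuclideanSpace.single 0 (-1), by
    rw [mem_sphere_zero_iff_norm, EuclideanSpace.norm_single]; norm_num⟩

lemma euclid1_eq (x : EuclideanSpace ℝ (Fin 1)) : x = EuclideanSpace.single 0 (x 0) := by
  ext i
  have hi : i = 0 := Subsingleton.elim i 0
  subst hi
  simp [EuclideanSpace.single_apply]

lemma sphere0_cases (s : nSphere 0) : s = spherePt 0 ∨ s = negPt := by
  obtain ⟨x, hx⟩ := s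
  have hn : ‖x‖ = 1 := by rwa [mem_sphere_zero_iff_norm] at hx
  have h0 : |x 0| = 1 := by
    rw [EuclideanSpace.norm_eq, Fin.sum_univ_one, Real.norm_eq_abs, sq_abs,
      Real.sqrt_sq_eq_abs] at hn
    exact hn
  rcases (abs_eq (by norm_num : (0:ℝ) ≤ 1)).1 h0 with h1 | h1
  · left
    apply Subtype.ext
    show x = _
    rw [euclid1_eq x, h1]; rfl
  · right
    apply Subtype.ext
    show x = _
    rw [euclid1_eq x, h1]; rfl

lemma negPt_ne : (negPt : nSphere 0) ≠ spherePt 0 := by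
  intro hEq
  have h2 : (EuclideanSpace.single 0 (-1) : EuclideanSpace ℝ (Fin 1)) =
      EuclideanSpace.single 0 1 := congrArg Subtype.val hEq
  have h3 := congrArg (fun v : EuclideanSpace ℝ (Fin 1) => v 0) h2
  simp only [EuclideanSpace.single_apply, if_pos rfl] at h3
  norm_num at h3

instance : Finite (nSphere 0) :=
  Finite.of_surjective (fun b : Bool => if b then spherePt 0 else negPt)
    (fun s => by
      rcases sphere0_cases s with h | h
      · exact ⟨true, h.symm⟩
      · exact ⟨false, h.symm⟩)

instance : T1Space (nSphere 0) := by unfold nSphere; infer_instance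

instance : DiscreteTopology (nSphere 0) := by
  have : Finite (nSphere 0) := inferInstance
  exact inferInstance

lemma discreteTopology_quot {α : Type*} [TopologicalSpace α] [DiscreteTopology α]
    (r : α → α → Prop) : DiscreteTopology (Quot r) :=
  discreteTopology_iff_forall_isOpen.mpr fun s =>
    isQuotientMap_quot_mk.isOpen_preimage.mp (isOpen_discrete _)

lemma discreteWedgeOfSpheres (k : ℕ) :
    DiscreteTopology (WedgeOfSpheres (fun _ : Fin k => 0)) := by
  unfold WedgeOfSpheres
  exact discreteTopology_quot _

end MCAux

/-- If `G` has at least two edges and some edge `h` with `EN[h] = E(G)` (so `h` meets every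
other edge), then `M(G) ≃ M(G \ {h}) ∨ S⁰`; if moreover every two edges of `G` meet, then
`M(G)` is a wedge of `|E(G)| - 1` copies of `S⁰`. -/
theorem matchingComplex_dominating_edge
    {V : Type*} [Fintype V] [DecidableEq V] (G : SimpleGraph V) [DecidableRel G.Adj]
    (h : Sym2 V) (hh : h ∈ G.edgeSet)
    (hEN : edgeNbhdClosed G h = G.edgeSet)
    (hcard : 2 ≤ G.edgeFinset.card) :
    (∃ (x : realization (matchingComplex (G.deleteEdges {h}))) (y : nSphere 0),
      Nonempty (ContinuousMap.HomotopyEquiv (realization (matchingComplex G))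
        (Wedge _ _ x y))) ∧
    ((∀ e ∈ G.edgeSet, ∀ f ∈ G.edgeSet, e ≠ f → ∃ v, v ∈ e ∧ v ∈ f) →
      Nonempty (ContinuousMap.HomotopyEquiv (realization (matchingComplex G))
        (WedgeOfSpheres (fun _ : Fin (G.edgeFinset.card - 1) => 0)))) := by
  classical
  have hG'edges : (G.deleteEdges {h}).edgeSet = G.edgeSet \ {h} :=
    SimpleGraph.edgeSet_deleteEdges {h}
  have hface : ∀ s ∈ matchingComplex G, h ∈ s → s = {h} := by
    intro s hs hhs
    obtain ⟨hsE, hdisj⟩ := hs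
    refine Finset.eq_singleton_iff_unique_mem.mpr ⟨hhs, ?_⟩
    intro e he
    by_contra hne
    have heN : e ∈ edgeNbhdClosed G h := by rw [hEN]; exact hsE e he
    obtain ⟨-, v, hvh, hve⟩ := heN
    exact hdisj h hhs e he (Ne.symm hne) v hvh hve
  have hKtoK' : ∀ s ∈ matchingComplex G, h ∉ s →
      s ∈ matchingComplex (G.deleteEdges {h}) := by
    intro s hs hns
    obtain ⟨hsE, hd⟩ := hs
    refine ⟨fun e he => ?_, hd⟩
    rw [hG'edges]
    refine ⟨hsE e he, ?_⟩
    intro heq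
    rw [Set.mem_singleton_iff] at heq
    exact hns (heq ▸ he)
  have hK'toK : ∀ s ∈ matchingComplex (G.deleteEdges {h}),
      s ∈ matchingComplex G ∧ h ∉ s := by
    intro s hs
    obtain ⟨hsE, hd⟩ := hs
    have hsub : ∀ e ∈ s, e ∈ G.edgeSet \ {h} := by
      intro e he
      rw [← hG'edges]
      exact hsE e he
    exact ⟨⟨fun e he => (hsub e he).1, hd⟩, fun hhs => (hsub h hhs).2 rfl⟩
  have hhK : ({h} : Finset (Sym2 V)) ∈ matchingComplex G := by
    refine ⟨fun a ha => ?_, fun a ha b hb hab => ?_⟩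
    · rw [Finset.mem_singleton] at ha; subst ha; exact hh
    · rw [Finset.mem_singleton] at ha hb; subst ha; subst hb; exact absurd rfl hab
  obtain ⟨e, heF, hne⟩ := Finset.exists_mem_ne (s := G.edgeFinset) (by omega) h
  have heE : e ∈ G.edgeSet := SimpleGraph.mem_edgeFinset.mp heF
  have heK' : ({e} : Finset (Sym2 V)) ∈ matchingComplex (G.deleteEdges {h}) := by
    refine ⟨fun a ha => ?_, fun a ha b hb hab => ?_⟩
    · rw [Finset.mem_singleton] at ha; subst ha
      rw [hG'edges]
      exact ⟨heE, by simpa using hne⟩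
    · rw [Finset.mem_singleton] at ha hb; subst ha; subst hb; exact absurd rfl hab
  set X := realization (matchingComplex (G.deleteEdges {h})) with hXdef
  let x : X := MCAux.indPt e heK'
  have hXh : ∀ g : X, g.1 h = 0 := by
    intro g
    by_contra hgz
    obtain ⟨s, hsK, hsupp, hsum⟩ := g.2.2
    have : h ∈ s := by exact_mod_cast hsupp (Function.mem_support.mpr hgz)
    exact (hK'toK s hsK).2 this
  let incl : X → realization (matchingComplex G) := fun g =>
    ⟨g.1, g.2.1, by
      obtain ⟨s, hsK, h1, h2⟩ := g.2.2
      exact ⟨s, (hK'toK s hsK).1, h1, h2⟩⟩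
  have hincl : Continuous incl := Continuous.subtype_mk continuous_subtype_val _
  have hev : Continuous (fun f : realization (matchingComplex G) => f.1 h) :=
    (continuous_apply h).comp continuous_subtype_val
  have hkey : ∀ f : realization (matchingComplex G), f.1 h ≠ 0 → f.1 = MCAux.ind h :=
    fun f hf => MCAux.eq_ind f.2.2 hface hf
  have hAset : {f : realization (matchingComplex G) | f.1 h = 0} =
      (fun f : realization (matchingComplex G) => f.1 h) ⁻¹' Set.Iio 1 := by
    ext f
    simp only [Set.mem_setOf_eq, Set.mem_preimage, Set.mem_Iio]
    constructor
    · intro h0; rw [h0]; norm_num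
    · intro hlt
      by_contra h0
      rw [hkey f h0, MCAux.ind_self] at hlt
      exact lt_irrefl 1 hlt
  have hAopen : IsOpen {f : realization (matchingComplex G) | f.1 h = 0} := by
    rw [hAset]; exact isOpen_Iio.preimage hev
  have hAclosed : IsClosed {f : realization (matchingComplex G) | f.1 h = 0} := by
    have hs2 : {f : realization (matchingComplex G) | f.1 h = 0} =
        (fun f : realization (matchingComplex G) => f.1 h) ⁻¹' {0} := rfl
    rw [hs2]; exact isClosed_singleton.preimage hev
  have hfront : frontier {f : realization (matchingComplex G) | f.1 h = 0} = ∅ :=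
    IsClopen.frontier_eq ⟨hAclosed, hAopen⟩
  let w : realization (matchingComplex G) → (Sym2 V → ℝ) := fun f =>
    if f.1 h = 0 then f.1 else MCAux.ind e
  have hwcont : Continuous w := by
    refine Continuous.if ?_ continuous_subtype_val continuous_const
    intro a ha
    rw [hfront] at ha
    exact absurd ha (Set.notMem_empty a)
  have hwmem : ∀ f : realization (matchingComplex G), (∀ a, 0 ≤ w f a) ∧
      ∃ s ∈ matchingComplex (G.deleteEdges {h}),
      Function.support (w f) ⊆ ↑s ∧ ∑ a ∈ s, w f a = 1 := by
    intro f
    by_cases hf : f.1 h = 0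
    · have hwf : w f = f.1 := if_pos hf
      rw [hwf]
      obtain ⟨hpos, s, hsK, hsupp, hsum⟩ := f.2
      refine ⟨hpos, s, ?_, hsupp, hsum⟩
      apply hKtoK' s hsK
      intro hhs
      have hseq := hface s hsK hhs
      rw [hseq, Finset.sum_singleton] at hsum
      rw [hsum] at hf
      norm_num at hf
    · have hwf : w f = MCAux.ind e := if_neg hf
      rw [hwf]
      exact MCAux.ind_mem_realization heK'
  let u : realization (matchingComplex G) → X := fun f => ⟨w f, hwmem f⟩
  have hu : Continuous u := hwcont.subtype_mk _
  let Φ : realization (matchingComplex G) → Wedge X (nSphere 0) x (spherePt 0) := fun f =>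
    if f.1 h = 0 then Quot.mk _ (Sum.inl (u f)) else Quot.mk _ (Sum.inr MCAux.negPt)
  have hΦ : Continuous Φ := by
    refine Continuous.if ?_ ?_ continuous_const
    · intro a ha
      rw [hfront] at ha
      exact absurd ha (Set.notMem_empty a)
    · exact continuous_quot_mk.comp (continuous_inl.comp hu)
  let Ψf : X ⊕ nSphere 0 → realization (matchingComplex G) :=
    Sum.elim incl (fun s => if s = spherePt 0 then incl x else MCAux.indPt h hhK)
  have hresp : ∀ a b : X ⊕ nSphere 0,
      (a = Sum.inl x ∧ b = Sum.inr (spherePt 0)) → Ψf a = Ψf b := by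
    rintro _ _ ⟨rfl, rfl⟩
    have h2 : Ψf (Sum.inr (spherePt 0)) = incl x := if_pos rfl
    rw [h2]
    exact rfl
  let Ψ : Wedge X (nSphere 0) x (spherePt 0) → realization (matchingComplex G) :=
    Quot.lift Ψf hresp
  have hΨ : Continuous Ψ :=
    continuous_quot_lift hresp (Continuous.sumElim hincl continuous_of_discreteTopology)
  have hleft : ∀ f, Ψ (Φ f) = f := by
    intro f
    by_cases hf : f.1 h = 0
    · have h1 : Φ f = Quot.mk _ (Sum.inl (u f)) := if_pos hf
      rw [h1]
      have ht : Ψ (Quot.mk _ (Sum.inl (u f))) = incl (u f) := rfl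
      rw [ht]
      exact Subtype.ext (if_pos hf)
    · have h1 : Φ f = Quot.mk _ (Sum.inr MCAux.negPt) := if_neg hf
      rw [h1]
      have ht : Ψ (Quot.mk _ (Sum.inr MCAux.negPt)) =
          (if (MCAux.negPt : nSphere 0) = spherePt 0 then incl x else MCAux.indPt h hhK) := rfl
      rw [ht, if_neg MCAux.negPt_ne]
      exact Subtype.ext (hkey f hf).symm
  have hright : ∀ q, Φ (Ψ q) = q := by
    intro q
    induction q using Quot.ind with
    | _ a =>
      cases a with
      | inl g =>
        have ht : Ψ (Quot.mk _ (Sum.inl g)) = incl g := rfl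
        rw [ht]
        have h0 : (incl g).1 h = 0 := hXh g
        have h1 : Φ (incl g) = Quot.mk _ (Sum.inl (u (incl g))) := if_pos h0
        rw [h1]
        have h2 : u (incl g) = g := Subtype.ext (if_pos h0)
        rw [h2]
      | inr s =>
        rcases MCAux.sphere0_cases s with rfl | rfl
        · have ht : Ψ (Quot.mk _ (Sum.inr (spherePt 0))) =
              (if (spherePt 0 : nSphere 0) = spherePt 0 then incl x else MCAux.indPt h hhK) := rfl
          rw [ht, if_pos rfl]
          have h0 : (incl x).1 h = 0 := hXh x
          have h1 : Φ (incl x) = Quot.mk _ (Sum.inl (u (incl x))) := if_pos h0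
          rw [h1]
          have h2 : u (incl x) = x := Subtype.ext (if_pos h0)
          rw [h2]
          exact Quot.sound ⟨rfl, rfl⟩
        · have ht : Ψ (Quot.mk _ (Sum.inr MCAux.negPt)) =
              (if (MCAux.negPt : nSphere 0) = spherePt 0 then incl x else MCAux.indPt h hhK) := rfl
          rw [ht, if_neg MCAux.negPt_ne]
          have h0 : ¬ ((MCAux.indPt h hhK : realization (matchingComplex G)).1 h = 0) := by
            intro hzero
            have hz2 : MCAux.ind h h = (0:ℝ) := hzero
            rw [MCAux.ind_self] at hz2
            norm_num at hz2
          exact if_neg h0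
  constructor
  · exact ⟨x, spherePt 0,
      ⟨(Homeomorph.mk ⟨Φ, Ψ, hleft, hright⟩ hΦ hΨ).toHomotopyEquiv⟩⟩
  -- part 2
  intro Hmeet
  have hsingle : ∀ s ∈ matchingComplex G, ∀ a ∈ s, ∀ b ∈ s, a = b := by
    intro s hs a ha b hb
    obtain ⟨hsE, hd⟩ := hs
    by_contra hab
    obtain ⟨v, hva, hvb⟩ := Hmeet a (hsE a ha) b (hsE b hb) hab
    exact hd a ha b hb hab v hva hvb
  have hsingleK : ∀ c ∈ G.edgeSet, ({c} : Finset (Sym2 V)) ∈ matchingComplex G := by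
    intro c hc
    refine ⟨fun a ha => ?_, fun a ha b hb hab => ?_⟩
    · rw [Finset.mem_singleton] at ha; subst ha; exact hc
    · rw [Finset.mem_singleton] at ha hb; subst ha; subst hb; exact absurd rfl hab
  have hpoint : ∀ f : realization (matchingComplex G),
      ∃ c ∈ G.edgeSet, f.1 = MCAux.ind c := by
    intro f
    obtain ⟨hpos, s, hsK, hsupp, hsum⟩ := f.2
    have hsne : s.Nonempty := by
      rcases Finset.eq_empty_or_nonempty s with rfl | hs
      · simp at hsum
      · exact hs
    obtain ⟨c, hc⟩ := hsne
    have hseq : s = {c} :=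
      Finset.eq_singleton_iff_unique_mem.mpr ⟨hc, fun a ha => hsingle s hsK a ha c hc⟩
    obtain ⟨hsE, -⟩ := hsK
    subst hseq
    refine ⟨c, hsE c hc, MCAux.eq_ind_of_support ?_ ?_⟩
    · simpa using hsupp
    · simpa using hsum
  let θ : {a // a ∈ G.edgeFinset} → realization (matchingComplex G) := fun a =>
    MCAux.indPt a.1 (hsingleK a.1 (SimpleGraph.mem_edgeFinset.mp a.2))
  have hθinj : Function.Injective θ := by
    intro a b hab
    have h1 : MCAux.ind a.1 a.1 = MCAux.ind b.1 a.1 :=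
      congrArg (fun f : realization (matchingComplex G) => f.1 a.1) hab
    rw [MCAux.ind_self] at h1
    by_contra hne2
    have hne3 : a.1 ≠ b.1 := fun hv => hne2 (Subtype.ext hv)
    rw [MCAux.ind_of_ne hne3] at h1
    norm_num at h1
  have hθsurj : Function.Surjective θ := by
    intro f
    obtain ⟨c, hc, hfc⟩ := hpoint f
    exact ⟨⟨c, SimpleGraph.mem_edgeFinset.mpr hc⟩, Subtype.ext hfc.symm⟩
  haveI hdisc : DiscreteTopology (realization (matchingComplex G)) := by
    apply discreteTopology_iff_isOpen_singleton.mpr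
    intro f
    obtain ⟨c, hc, hfc⟩ := hpoint f
    have hset : ({f} : Set (realization (matchingComplex G))) =
        (fun g : realization (matchingComplex G) => g.1 c) ⁻¹' Set.Ioi (1/2 : ℝ) := by
      ext g
      simp only [Set.mem_singleton_iff, Set.mem_preimage, Set.mem_Ioi]
      constructor
      · rintro rfl
        rw [hfc, MCAux.ind_self]
        norm_num
      · intro hg
        obtain ⟨c', hc', hgc⟩ := hpoint g
        have hcc : c = c' := by
          by_contra hcc
          rw [hgc, MCAux.ind_of_ne hcc] at hg
          norm_num at hg
        apply Subtype.ext
        rw [hgc, hfc, hcc]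
    rw [hset]
    exact isOpen_Ioi.preimage ((continuous_apply c).comp continuous_subtype_val)
  set k := G.edgeFinset.card - 1 with hkdef
  have hkpos : 0 < k := by omega
  let i0 : Fin k := ⟨0, hkpos⟩
  let toW : Option (Fin k) → WedgeOfSpheres (fun _ : Fin k => 0) := fun o =>
    Option.elim o (Quot.mk _ ⟨i0, spherePt 0⟩) (fun i => Quot.mk _ ⟨i, MCAux.negPt⟩)
  have hrespW : ∀ a b : Σ _ : Fin k, nSphere 0,
      (∃ i j : Fin k, a = ⟨i, spherePt 0⟩ ∧ b = ⟨j, spherePt 0⟩) →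
      (if a.2 = spherePt 0 then none else some a.1) =
      (if b.2 = spherePt 0 then none else some b.1) := by
    rintro _ _ ⟨i, j, rfl, rfl⟩
    simp
  let fromW : WedgeOfSpheres (fun _ : Fin k => 0) → Option (Fin k) :=
    Quot.lift (fun p : Σ _ : Fin k, nSphere 0 =>
      if p.2 = spherePt 0 then none else some p.1) hrespW
  have hWleft : ∀ o : Option (Fin k), fromW (toW o) = o := by
    intro o
    cases o with
    | none => exact if_pos rfl
    | some i => exact if_neg MCAux.negPt_ne
  have hWright : ∀ q, toW (fromW q) = q := by
    intro q
    induction q using Quot.ind with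
    | _ p =>
      obtain ⟨i, s⟩ := p
      rcases MCAux.sphere0_cases s with rfl | rfl
      · have ht : fromW (Quot.mk _ ⟨i, spherePt 0⟩) = none := if_pos rfl
        rw [ht]
        exact Quot.sound ⟨i0, i, rfl, rfl⟩
      · have ht : fromW (Quot.mk _ ⟨i, MCAux.negPt⟩) = some i := if_neg MCAux.negPt_ne
        rw [ht]
        exact rfl
  let eW : Option (Fin k) ≃ WedgeOfSpheres (fun _ : Fin k => 0) := ⟨toW, fromW, hWleft, hWright⟩
  haveI := MCAux.discreteWedgeOfSpheres k
  let E1 : realization (matchingComplex G) ≃ {a // a ∈ G.edgeFinset} :=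
    (Equiv.ofBijective θ ⟨hθinj, hθsurj⟩).symm
  let E2 : {a // a ∈ G.edgeFinset} ≃ Fin (G.edgeFinset.card) := G.edgeFinset.equivFin
  let E3 : Fin (G.edgeFinset.card) ≃ Fin (k + 1) := finCongr (by omega)
  let E4 : Fin (k + 1) ≃ Option (Fin k) := finSuccEquiv k
  let E : realization (matchingComplex G) ≃ WedgeOfSpheres (fun _ : Fin k => 0) :=
    E1.trans (E2.trans (E3.trans (E4.trans eW)))
  exact ⟨(Homeomorph.mk E continuous_of_discreteTopology
    continuous_of_discreteTopology).toHomotopyEquiv⟩
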